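/- Define χ : [0,∞) → ℝ by χ(t) = t·(2 + (c/3)t)/(2 + (2c/3)t) for 0 ≤ t ≤ η/2 and χ(t) = t·(2 + cη/6)/(2 + cη/3) for t > η/2, where c, η > 0 are fixed. Then χ is continuous, strictly increasing, χ(0) = 0, χ(t) < t for t > 0, and for every t ≥ 0 the iterates χⁿ(t) converge to 0 as n → ∞. -/
import Mathlib


noncomputable def χ (c η t : ℝ) : ℝ :=
  if t ≤ η/2 then t * (2 + (c/3)*t) / (2 + (2*c/3)*t)
  else t * (2 + c*η/6) / (2 + c*η/3)

theorem stmt_14 (c η : ℝ) (hc : 0 < c) (hη : 0 < η) :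
    ContinuousOn (χ c η) (Set.Ici 0) ∧
    StrictMonoOn (χ c η) (Set.Ici 0) ∧
    χ c η 0 = 0 ∧
    (∀ t > (0:ℝ), χ c η t < t) ∧
    (∀ t ≥ (0:ℝ), Filter.Tendsto (fun n => (χ c η)^[n] t) Filter.atTop (nhds 0)) := by
  set w := η/2 with hw
  have hw0 : 0 < w := by positivity
  have hχ : ∀ t, χ c η t = t * (2 + (c/3) * min t w) / (2 + (2*c/3) * min t w) := by
    intro t
    unfold χ
    rcases le_or_gt t w with h | h
    · rw [if_pos h, min_eq_left h]
    · rw [if_neg (not_le.mpr h), min_eq_right h.le, hw]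
      ring_nf
  have hden : ∀ t : ℝ, 0 ≤ t → 0 < 2 + (2*c/3) * min t w := by
    intro t ht
    have h1 : 0 ≤ min t w := le_min ht hw0.le
    nlinarith
  have hcont : ContinuousOn (χ c η) (Set.Ici 0) := by
    have hc1 : ContinuousOn (fun t : ℝ =>
        t * (2 + (c/3) * min t w) / (2 + (2*c/3) * min t w)) (Set.Ici 0) := by
      apply ContinuousOn.div
      · fun_prop
      · fun_prop
      · intro t ht
        exact ne_of_gt (hden t ht)
    exact hc1.congr fun t _ => hχ t
  have hmono : StrictMonoOn (χ c η) (Set.Ici 0) := by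
    intro s hs t ht hst
    have hs0 : (0:ℝ) ≤ s := hs
    have ht0 : (0:ℝ) ≤ t := ht
    rw [hχ s, hχ t, div_lt_div_iff₀ (hden s hs0) (hden t ht0)]
    rcases le_or_gt t w with htw | htw
    · have hsw : s ≤ w := le_of_lt (lt_of_lt_of_le hst htw)
      rw [min_eq_left hsw, min_eq_left htw]
      nlinarith [mul_pos hc (sub_pos.mpr hst), mul_nonneg hc.le (mul_nonneg hs0 ht0),
        mul_nonneg (mul_nonneg (mul_nonneg hc.le hc.le) (mul_nonneg hs0 ht0)) (sub_pos.mpr hst).le,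
        mul_nonneg (mul_nonneg hc.le (add_nonneg hs0 ht0)) (sub_pos.mpr hst).le]
    · rcases le_or_gt s w with hsw | hsw
      · rw [min_eq_left hsw, min_eq_right htw.le]
        nlinarith [mul_pos hc (sub_pos.mpr hst), sub_pos.mpr hst,
          mul_nonneg (mul_nonneg hc.le hs0) (sub_pos.mpr htw).le,
          mul_nonneg (mul_nonneg hc.le hw0.le) (sub_pos.mpr hst).le,
          mul_nonneg (mul_nonneg hc.le hs0) (sub_nonneg.mpr hsw),
          mul_nonneg (mul_nonneg (mul_nonneg hc.le hc.le) (mul_nonneg hs0 hw0.le)) (sub_pos.mpr hst).le]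
      · rw [min_eq_right hsw.le, min_eq_right htw.le]
        nlinarith [mul_pos hc hw0, sub_pos.mpr hst,
          mul_nonneg (mul_nonneg hc.le hw0.le) (sub_pos.mpr hst).le,
          mul_nonneg (mul_nonneg (mul_nonneg hc.le hc.le) (mul_nonneg hw0.le hw0.le)) (sub_pos.mpr hst).le]
  have hzero : χ c η 0 = 0 := by
    unfold χ
    rw [if_pos (by positivity : (0:ℝ) ≤ η/2)]
    simp
  have hlt : ∀ t > (0:ℝ), χ c η t < t := by
    intro t ht
    have hu : 0 < min t w := lt_min ht hw0
    rw [hχ t, div_lt_iff₀ (hden t ht.le)]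
    nlinarith [mul_pos (mul_pos hc ht) hu]
  have hpos : ∀ t : ℝ, 0 ≤ t → 0 ≤ χ c η t := by
    intro t ht
    rw [hχ t]
    have h1 : 0 ≤ min t w := le_min ht hw0.le
    have h2 : 0 < 2 + (2*c/3) * min t w := hden t ht
    have h3 : 0 ≤ t * (2 + (c/3) * min t w) := by nlinarith
    positivity
  refine ⟨hcont, hmono, hzero, hlt, ?_⟩
  intro t ht
  set x : ℕ → ℝ := fun n => (χ c η)^[n] t with hx
  have hx0 : ∀ n, 0 ≤ x n := by
    intro n
    induction n with
    | zero => exact ht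
    | succ n ih =>
      have : x (n+1) = χ c η (x n) := Function.iterate_succ_apply' _ _ _
      rw [this]
      exact hpos _ ih
  have hdec : ∀ n, x (n+1) ≤ x n := by
    intro n
    have hstep : x (n+1) = χ c η (x n) := Function.iterate_succ_apply' _ _ _
    rcases (hx0 n).lt_or_eq with h | h
    · rw [hstep]; exact (hlt _ h).le
    · rw [hstep, ← h, hzero]
  have hanti : Antitone x := antitone_nat_of_succ_le hdec
  have hbdd : BddBelow (Set.range x) := ⟨0, by rintro y ⟨n, rfl⟩; exact hx0 n⟩
  have hconv : Filter.Tendsto x Filter.atTop (nhds (⨅ n, x n)) :=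
    tendsto_atTop_ciInf hanti hbdd
  set L := ⨅ n, x n with hL
  have hL0 : 0 ≤ L := le_ciInf hx0
  have hLfix : χ c η L = L := by
    have h1 : Filter.Tendsto (fun n => x (n+1)) Filter.atTop (nhds L) :=
      hconv.comp (Filter.tendsto_add_atTop_nat 1)
    have h2 : Filter.Tendsto (fun n => χ c η (x n)) Filter.atTop (nhds (χ c η L)) := by
      apply ((hcont L hL0).tendsto).comp
      exact tendsto_nhdsWithin_of_tendsto_nhds_of_eventually_within _ hconv
        (Filter.Eventually.of_forall hx0)
    have heq : (fun n => x (n+1)) = fun n => χ c η (x n) := by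
      funext n; exact Function.iterate_succ_apply' _ _ _
    rw [heq] at h1
    exact tendsto_nhds_unique h2 h1
  rcases hL0.lt_or_eq with h | h
  · exact absurd hLfix (ne_of_lt (hlt L h))
  · rw [← h] at hconv
    exact hconv
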